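/- If f is a circuit injection from a graph G onto a graph G' (so G' has no isolated vertices and f is surjective on edges) and G is 3-connected, then G' has no isolated edges: for any two edges e₁', e₂' of G' there is a circuit of G' containing both. -/

import Mathlib

open SimpleGraph

universe u v

/-- A circuit of `G` is the edge set of a cycle of `G`. -/
def IsCircuit {V : Type u} (G : SimpleGraph V) (C : Set (Sym2 V)) : Prop :=
  ∃ (x : V) (w : G.Walk x x), w.IsCycle ∧ C = {e | e ∈ w.edges}

/-- The set of vertices covered by a set of edges. -/
def circVerts {V : Type u} (C : Set (Sym2 V)) : Set V :=
  {x | ∃ e ∈ C, x ∈ e}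

/-- A set of edges is independent if its edges are pairwise nonadjacent. -/
def IndepEdges {V : Type u} (A : Set (Sym2 V)) : Prop :=
  ∀ e₁ ∈ A, ∀ e₂ ∈ A, e₁ ≠ e₂ → ∀ x : V, x ∈ e₁ → x ∉ e₂

/-- 2-connected: connected, at least 3 vertices, and deleting any one vertex
leaves the graph connected. -/
def TwoConnected {V : Type u} (G : SimpleGraph V) : Prop :=
  G.Connected ∧ (3 : Cardinal) ≤ Cardinal.mk V ∧
    ∀ x : V, (G.induce {x}ᶜ).Connected

/-- 3-connected: at least 4 vertices and deleting any two vertices leaves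
the graph connected. -/
def ThreeConnected {V : Type u} (G : SimpleGraph V) : Prop :=
  (4 : Cardinal) ≤ Cardinal.mk V ∧
    ∀ x y : V, (G.induce ({x, y} : Set V)ᶜ).Connected

/-- k-connected: more than k vertices and deleting any set of fewer than k
vertices leaves the graph connected. -/
def KConnected {V : Type u} (k : ℕ) (G : SimpleGraph V) : Prop :=
  (k : Cardinal) < Cardinal.mk V ∧
    ∀ s : Set V, s.Finite → Nat.card s < k → (G.induce sᶜ).Connected

/-- The image of a set of edges of `G` under an edge map `f`. -/
def mapEdges {V : Type u} {V' : Type v} (G : SimpleGraph V) (G' : SimpleGraph V')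
    (f : G.edgeSet → G'.edgeSet) (C : Set (Sym2 V)) : Set (Sym2 V') :=
  {e' | ∃ e : G.edgeSet, (e : Sym2 V) ∈ C ∧ (f e : Sym2 V') = e'}

/-- The preimage of a set of edges of `G'` under an edge map `f`. -/
def preimEdges {V : Type u} {V' : Type v} (G : SimpleGraph V) (G' : SimpleGraph V')
    (f : G.edgeSet → G'.edgeSet) (S : Set (Sym2 V')) : Set (Sym2 V) :=
  {e | ∃ he : e ∈ G.edgeSet, (f ⟨e, he⟩ : Sym2 V') ∈ S}

/-- A circuit injection from `G` onto `G'`: an injective, surjective map on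
edges carrying every circuit of `G` to a circuit of `G'`, where `G'` has no
isolated vertices. -/
def IsCircuitInjection {V : Type u} {V' : Type v} (G : SimpleGraph V) (G' : SimpleGraph V')
    (f : G.edgeSet → G'.edgeSet) : Prop :=
  Function.Injective f ∧ Function.Surjective f ∧
    (∀ C : Set (Sym2 V), IsCircuit G C → IsCircuit G' (mapEdges G G' f C)) ∧
    ∀ x : V', ∃ y : V', G'.Adj x y

/-- `G` contains a subgraph of type X with connectors `e₁`, `e₂`, `e₃`:
two vertex-disjoint circuits `CA`, `CB`, edges `e₁ = (a₁,b₁)`, `e₂ = (a₂,b₂)`,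
and a path from `a₃` to `b₃` internally disjoint from both circuits, with
`a₁,a₂,a₃` distinct on `CA` and `b₁,b₂,b₃` distinct on `CB`, and `e₃` an edge
of the path. -/
def IsTypeXWith {V : Type u} (G : SimpleGraph V) (e₁ e₂ e₃ : Sym2 V) : Prop :=
  ∃ (a₁ a₂ a₃ b₁ b₂ b₃ : V) (CA CB : Set (Sym2 V)) (P : G.Walk a₃ b₃),
    IsCircuit G CA ∧ IsCircuit G CB ∧
    Disjoint (circVerts CA) (circVerts CB) ∧
    a₁ ∈ circVerts CA ∧ a₂ ∈ circVerts CA ∧ a₃ ∈ circVerts CA ∧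
    b₁ ∈ circVerts CB ∧ b₂ ∈ circVerts CB ∧ b₃ ∈ circVerts CB ∧
    a₁ ≠ a₂ ∧ a₁ ≠ a₃ ∧ a₂ ≠ a₃ ∧ b₁ ≠ b₂ ∧ b₁ ≠ b₃ ∧ b₂ ≠ b₃ ∧
    G.Adj a₁ b₁ ∧ G.Adj a₂ b₂ ∧ e₁ = s(a₁, b₁) ∧ e₂ = s(a₂, b₂) ∧
    P.IsPath ∧
    (∀ x ∈ P.support, x ≠ a₃ → x ≠ b₃ → x ∉ circVerts CA ∪ circVerts CB) ∧
    e₃ ∈ P.edges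

/-- `G` is (all of) a graph of type X with connectors `e₁`, `e₂`, `e₃`. -/
def IsTypeXGraph {V : Type u} (G : SimpleGraph V) (e₁ e₂ e₃ : Sym2 V) : Prop :=
  ∃ (a₁ a₂ a₃ b₁ b₂ b₃ : V) (CA CB : Set (Sym2 V)) (P : G.Walk a₃ b₃),
    IsCircuit G CA ∧ IsCircuit G CB ∧
    Disjoint (circVerts CA) (circVerts CB) ∧
    a₁ ∈ circVerts CA ∧ a₂ ∈ circVerts CA ∧ a₃ ∈ circVerts CA ∧
    b₁ ∈ circVerts CB ∧ b₂ ∈ circVerts CB ∧ b₃ ∈ circVerts CB ∧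
    a₁ ≠ a₂ ∧ a₁ ≠ a₃ ∧ a₂ ≠ a₃ ∧ b₁ ≠ b₂ ∧ b₁ ≠ b₃ ∧ b₂ ≠ b₃ ∧
    G.Adj a₁ b₁ ∧ G.Adj a₂ b₂ ∧ e₁ = s(a₁, b₁) ∧ e₂ = s(a₂, b₂) ∧
    P.IsPath ∧
    (∀ x ∈ P.support, x ≠ a₃ → x ≠ b₃ → x ∉ circVerts CA ∪ circVerts CB) ∧
    e₃ ∈ P.edges ∧
    G.edgeSet = CA ∪ CB ∪ {e₁, e₂} ∪ {e | e ∈ P.edges}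


/-! Any two edges of a 2-connected graph lie on a common cycle, and `f` carries that cycle to a
circuit of `G'` through the two given edges (their preimages exist by surjectivity).

Fix edges `ab` and `cd`. A cycle through `ab` exists (close `a b c` by a path avoiding `b`), and it
can be moved to pass through any vertex: walking away from the cycle along an edge `uv`, a path
from `v` back to the cycle avoiding `u` is an ear, which together with the arc containing `ab`
forms a new cycle. Take such a cycle through `ab` and `c`. Either `cd` lies on it, or `cd` is a
chord, or `d` lies off the cycle; in the last two cases the ear `cd`, resp. `c d ⋯` again gives
the cycle. -/

namespace SimpleGraph

variable {V : Type*} {G : SimpleGraph V}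

lemma exists_ne_ne_of_three_le_mk (h : (3 : Cardinal) ≤ Cardinal.mk V) (a b : V) :
    ∃ z, z ≠ a ∧ z ≠ b := by
  by_contra! hab
  have hsub : (Set.univ : Set V) ⊆ {a, b} := fun z _ => by
    by_cases hz : z = a
    · exact .inl hz
    · exact .inr (hab z hz)
  have h2 : Cardinal.mk V ≤ 2 :=
    calc Cardinal.mk V = Cardinal.mk (Set.univ : Set V) := Cardinal.mk_univ.symm
      _ ≤ Cardinal.mk ({a, b} : Set V) := Cardinal.mk_le_mk_of_subset hsub
      _ ≤ 2 := Cardinal.mk_insert_le.trans (by simp; norm_num)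
  exact absurd (h.trans h2) (by norm_num)

lemma exists_isPath_of_preconnected_induce {s : Set V} (hs : (G.induce s).Preconnected)
    {x y : V} (hx : x ∈ s) (hy : y ∈ s) :
    ∃ p : G.Walk x y, p.IsPath ∧ ∀ z ∈ p.support, z ∈ s := by
  classical
  obtain ⟨q⟩ := hs ⟨x, hx⟩ ⟨y, hy⟩
  refine ⟨(q.map (Embedding.induce s).toHom).bypass, Walk.bypass_isPath _, fun z hz => ?_⟩
  obtain ⟨z', -, rfl⟩ := List.mem_map.mp
    (Walk.support_map _ _ ▸ Walk.support_bypass_subset_support _ hz)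
  exact z'.2

lemma exists_isCycle_of_adj_of_adj {a b c : V}
    (hb : (G.induce {b}ᶜ).Preconnected) (hab : G.Adj a b) (hbc : G.Adj b c) (hac : a ≠ c) :
    ∃ (y : V) (W : G.Walk y y), W.IsCycle ∧ s(a, b) ∈ W.edges ∧ s(b, c) ∈ W.edges := by
  obtain ⟨q, hq, hqb⟩ := exists_isPath_of_preconnected_induce hb
    (show c ∈ ({b}ᶜ : Set V) from hbc.ne') (show a ∈ ({b}ᶜ : Set V) from hab.ne)
  have hbq : b ∉ q.support := fun h => hqb b h rfl
  refine ⟨a, .cons hab (.cons hbc q), ?_, by simp, by simp⟩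
  rw [Walk.cons_isCycle_iff, Walk.cons_isPath_iff]
  refine ⟨⟨hq, hbq⟩, ?_⟩
  simp only [Walk.edges_cons, List.mem_cons, not_or]
  exact ⟨by simp [hab.ne, hac], fun h => hbq (q.snd_mem_support_of_mem_edges h)⟩

namespace Walk

lemma edges_eq_singleton_of_length_eq_one {u v : V} {p : G.Walk u v} (h : p.length = 1) :
    p.edges = [s(u, v)] := by
  cases p with
  | nil => simp at h
  | cons _ p' =>
    cases p' with
    | nil => rfl
    | cons => simp at h

lemma exists_isPath_to_first_mem {x y : V} (R : G.Walk x y) {S : Set V} (hy : y ∈ S) :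
    ∃ w ∈ S, ∃ R' : G.Walk x w, R'.IsPath ∧ R'.support ⊆ R.support ∧
      ∀ z ∈ R'.support, z ∈ S → z = w := by
  classical
  suffices ∃ w ∈ S, ∃ R' : G.Walk x w, R'.support ⊆ R.support ∧
      ∀ z ∈ R'.support, z ∈ S → z = w by
    obtain ⟨w, hw, R', hsub, hfirst⟩ := this
    exact ⟨w, hw, R'.bypass, R'.bypass_isPath,
      fun z hz => hsub (R'.support_bypass_subset_support hz),
      fun z hz => hfirst z (R'.support_bypass_subset_support hz)⟩
  induction R with
  | nil => exact ⟨_, hy, nil, by simp, by simp⟩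
  | @cons a _ _ hab R ih =>
    by_cases ha : a ∈ S
    · exact ⟨a, ha, nil, by simp, by simp⟩
    · obtain ⟨w, hw, R', hsub, hfirst⟩ := ih hy
      refine ⟨w, hw, cons hab R', ?_, ?_⟩
      · simpa using List.cons_subset_cons a hsub
      · simp only [support_cons, List.mem_cons, forall_eq_or_imp]
        exact ⟨fun h => absurd h ha, hfirst⟩

/-- `e` excludes the degenerate case where `p` and `q` are the same single edge. -/
lemma IsPath.isCycle_append_of_mem_edges {u v : V} {p : G.Walk u v} {q : G.Walk v u}
    (hp : p.IsPath) (hq : q.IsPath) (hpq : ∀ z ∈ p.support, z ∈ q.support → z = u ∨ z = v)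
    {e : Sym2 V} (hep : e ∈ p.edges) (heq : e ∉ q.edges) : (p.append q).IsCycle := by
  have hpu : u ∉ p.support.tail :=
    (List.nodup_cons.mp (p.cons_tail_support ▸ hp.support_nodup)).1
  have hqv : v ∉ q.support.tail :=
    (List.nodup_cons.mp (q.cons_tail_support ▸ hq.support_nodup)).1
  refine hp.isCycle_append hq (fun z hzp hzq => ?_) ?_
  · rcases hpq z (List.mem_of_mem_tail hzp) (List.mem_of_mem_tail hzq) with rfl | rfl
    exacts [hpu hzp, hqv hzq]
  · by_contra! hlen
    have hp1 : p.length = 1 := by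
      have : ¬ p.Nil := fun h => by rw [edges_eq_nil.mpr h] at hep; simp at hep
      have := not_nil_iff_lt_length.mp this
      omega
    have he : e = s(u, v) := by simpa [edges_eq_singleton_of_length_eq_one hp1] using hep
    have hq1 : q.length = 1 := by
      have huv : u ≠ v := (p.adj_of_mem_edges (he ▸ hep)).ne
      have := not_nil_iff_lt_length.mp (not_nil_of_ne (p := q) huv.symm)
      omega
    simp [edges_eq_singleton_of_length_eq_one hq1, he, Sym2.eq_swap] at heq

lemma IsCycle.exists_isCycle_of_isPath {x u w : V} {C : G.Walk x x}
    (hC : C.IsCycle) {e : Sym2 V} (he : e ∈ C.edges) (hu : u ∈ C.support) (hw : w ∈ C.support)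
    (huw : u ≠ w) {P : G.Walk u w} (hP : P.IsPath)
    (hPC : ∀ z ∈ P.support, z ∈ C.support → z = u ∨ z = w) (heP : e ∉ P.edges) :
    ∃ (y : V) (W : G.Walk y y), W.IsCycle ∧ e ∈ W.edges ∧ P.edges ⊆ W.edges := by
  classical
  set C' := C.rotate u hu
  have hC' : C'.IsCycle := hC.rotate hu
  have hwC' : w ∈ C'.support := (C.mem_support_rotate_iff u hu).mpr hw
  set A := C'.takeUntil w hwC'
  set B := C'.dropUntil w hwC'
  have hAB : A.append B = C' := C'.take_spec hwC'
  have hA : A.IsPath := hC'.isPath_takeUntil hwC'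
  have hB : B.IsPath := (hAB ▸ hC').isPath_of_append_right (not_nil_of_ne huw)
  have hAC : ∀ z ∈ A.support, z ∈ C.support := fun z hz =>
    (C.mem_support_rotate_iff u hu).mp (C'.support_takeUntil_subset_support hwC' hz)
  have hBC : ∀ z ∈ B.support, z ∈ C.support := fun z hz =>
    (C.mem_support_rotate_iff u hu).mp (C'.support_dropUntil_subset_support hwC' hz)
  have heAB : e ∈ A.edges ∨ e ∈ B.edges := by
    rw [← List.mem_append, ← edges_append, hAB]
    exact (C.rotate_edges u hu).mem_iff.mpr he
  rcases heAB with heA | heB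
  · refine ⟨u, A.append P.reverse, ?_, by simp [heA], fun e' he' => by simp [he']⟩
    refine hA.isCycle_append_of_mem_edges hP.reverse (fun z hzA hzP => ?_) heA (by simpa)
    exact hPC z (by simpa using hzP) (hAC z hzA)
  · refine ⟨w, B.append P, ?_, by simp [heB], fun e' he' => by simp [he']⟩
    refine hB.isCycle_append_of_mem_edges hP (fun z hzB hzP => ?_) heB heP
    exact (hPC z hzP (hBC z hzB)).symm

lemma IsCycle.exists_isCycle_of_adj {x u v : V} {C : G.Walk x x}
    (hC : C.IsCycle) {e : Sym2 V} (he : e ∈ C.edges) (hu : (G.induce {u}ᶜ).Preconnected)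
    (huC : u ∈ C.support) (huv : G.Adj u v) (hvC : v ∉ C.support) :
    ∃ (y : V) (W : G.Walk y y), W.IsCycle ∧ e ∈ W.edges ∧ s(u, v) ∈ W.edges := by
  have hCu : ∃ t ∈ C.support, t ≠ u := by
    induction e with
    | h a b =>
      by_cases ha : a = u
      · exact ⟨b, C.snd_mem_support_of_mem_edges he,
          fun hb => (C.adj_of_mem_edges he).ne (ha.trans hb.symm)⟩
      · exact ⟨a, C.fst_mem_support_of_mem_edges he, ha⟩
  obtain ⟨t, htC, htu⟩ := hCu
  obtain ⟨R, -, hRu⟩ := exists_isPath_of_preconnected_induce hu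
    (show v ∈ ({u}ᶜ : Set V) from huv.ne') (show t ∈ ({u}ᶜ : Set V) from htu)
  obtain ⟨w, hwC, R', hR', hR'R, hR'C⟩ :=
    R.exists_isPath_to_first_mem (S := {z | z ∈ C.support}) htC
  have huR' : u ∉ R'.support := fun h => hRu u (hR'R h) rfl
  have hwu : w ≠ u := fun h => huR' (h ▸ R'.end_mem_support)
  have heP : e ∉ (cons huv R').edges := by
    induction e with
    | h a b =>
      rw [edges_cons, List.mem_cons, not_or]
      refine ⟨fun hab => hvC ?_, fun hR'ab => ?_⟩
      · exact C.snd_mem_support_of_mem_edges (hab ▸ he)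
      · have ha := hR'C a (R'.fst_mem_support_of_mem_edges hR'ab)
          (C.fst_mem_support_of_mem_edges he)
        have hb := hR'C b (R'.snd_mem_support_of_mem_edges hR'ab)
          (C.snd_mem_support_of_mem_edges he)
        exact (R'.adj_of_mem_edges hR'ab).ne (ha.trans hb.symm)
  have hPC : ∀ z ∈ (cons huv R').support, z ∈ C.support → z = u ∨ z = w := by
    simp only [support_cons, List.mem_cons, forall_eq_or_imp]
    exact ⟨fun _ => by simp, fun z hz hzC => .inr (hR'C z hz hzC)⟩
  obtain ⟨y, W, hW, heW, hPW⟩ := hC.exists_isCycle_of_isPath he huC hwC hwu.symm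
    ((cons_isPath_iff huv R').mpr ⟨hR', huR'⟩) hPC heP
  exact ⟨y, W, hW, heW, hPW (by simp)⟩

end Walk

namespace TwoConnected

lemma exists_adj_ne (hG : TwoConnected G) {a b : V} (hab : G.Adj a b) :
    ∃ c, G.Adj b c ∧ c ≠ a := by
  obtain ⟨z, hza, hzb⟩ := exists_ne_ne_of_three_le_mk hG.2.1 a b
  obtain ⟨p, -, hpa⟩ := exists_isPath_of_preconnected_induce (hG.2.2 a).preconnected
    (show b ∈ ({a}ᶜ : Set V) from hab.ne') (show z ∈ ({a}ᶜ : Set V) from hza)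
  have hp : ¬ p.Nil := Walk.not_nil_of_ne hzb.symm
  exact ⟨p.snd, p.adj_snd hp, hpa _ (p.getVert_mem_support 1)⟩

lemma exists_isCycle_mem_edges_mem_support (hG : TwoConnected G) {a b : V} (hab : G.Adj a b)
    (v : V) :
    ∃ (y : V) (W : G.Walk y y), W.IsCycle ∧ s(a, b) ∈ W.edges ∧ v ∈ W.support := by
  obtain ⟨q⟩ := hG.1.preconnected v b
  induction q with
  | nil =>
    obtain ⟨c, hbc, hca⟩ := hG.exists_adj_ne hab
    obtain ⟨y, W, hW, habW, hbcW⟩ :=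
      exists_isCycle_of_adj_of_adj (hG.2.2 _).preconnected hab hbc hca.symm
    exact ⟨y, W, hW, habW, W.fst_mem_support_of_mem_edges hbcW⟩
  | @cons u w _ huw _ ih =>
    obtain ⟨y, W, hW, habW, hwW⟩ := ih hab
    by_cases huW : u ∈ W.support
    · exact ⟨y, W, hW, habW, huW⟩
    obtain ⟨y', W', hW', habW', huwW'⟩ :=
      hW.exists_isCycle_of_adj habW (hG.2.2 w).preconnected hwW huw.symm huW
    exact ⟨y', W', hW', habW', W'.snd_mem_support_of_mem_edges huwW'⟩

theorem exists_isCycle_mem_edges (hG : TwoConnected G) {e₁ e₂ : Sym2 V}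
    (he₁ : e₁ ∈ G.edgeSet) (he₂ : e₂ ∈ G.edgeSet) :
    ∃ (y : V) (W : G.Walk y y), W.IsCycle ∧ e₁ ∈ W.edges ∧ e₂ ∈ W.edges := by
  induction e₁ using Sym2.ind with | h a b =>
  induction e₂ using Sym2.ind with | h c d =>
  obtain ⟨y, W, hW, habW, hcW⟩ := hG.exists_isCycle_mem_edges_mem_support he₁ c
  by_cases hcdW : s(c, d) ∈ W.edges
  · exact ⟨y, W, hW, habW, hcdW⟩
  by_cases hdW : d ∈ W.support
  · have hcd : G.Adj c d := he₂
    have habcd : s(a, b) ≠ s(c, d) := fun h => hcdW (h ▸ habW)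
    obtain ⟨y', W', hW', habW', hcdW'⟩ := hW.exists_isCycle_of_isPath habW hcW hdW hcd.ne
      hcd.isPath_toWalk (by simp [hcd.support_toWalk]) (by simp [hcd.edges_toWalk, habcd])
    exact ⟨y', W', hW', habW', hcdW' (by simp [hcd.edges_toWalk])⟩
  · exact hW.exists_isCycle_of_adj habW (hG.2.2 c).preconnected hcW he₂ hdW

end TwoConnected

lemma ThreeConnected.twoConnected (hG : ThreeConnected G) : TwoConnected G := by
  obtain ⟨h4, hdel⟩ := hG
  have h3 : (3 : Cardinal) ≤ Cardinal.mk V := le_trans (by norm_num) h4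
  have hdel₁ (x : V) : (G.induce {x}ᶜ).Connected := Set.pair_eq_singleton x ▸ hdel x x
  have : Nonempty V := Cardinal.mk_ne_zero_iff.mp (by rintro h; simp [h] at h3)
  refine ⟨⟨fun u v => ?_⟩, h3, hdel₁⟩
  obtain ⟨x, hxu, hxv⟩ := exists_ne_ne_of_three_le_mk h3 u v
  obtain ⟨p⟩ := (hdel₁ x).preconnected ⟨u, hxu.symm⟩ ⟨v, hxv.symm⟩
  exact ⟨p.map (Embedding.induce _).toHom⟩

end SimpleGraph

/-- If `f` is a circuit injection from a 3-connected graph `G`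
onto `G'`, then any two edges of `G'` lie on a common circuit of `G'`. -/
theorem statement12 {V : Type u} {V' : Type v} (G : SimpleGraph V) (G' : SimpleGraph V')
    (h3 : ThreeConnected G) (f : G.edgeSet → G'.edgeSet)
    (hf : IsCircuitInjection G G' f) :
    ∀ e₁' ∈ G'.edgeSet, ∀ e₂' ∈ G'.edgeSet,
      ∃ C' : Set (Sym2 V'), IsCircuit G' C' ∧ e₁' ∈ C' ∧ e₂' ∈ C' := by
  obtain ⟨-, hsurj, hcirc, -⟩ := hf
  intro e₁' h₁' e₂' h₂'
  obtain ⟨E₁, hE₁⟩ := hsurj ⟨e₁', h₁'⟩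
  obtain ⟨E₂, hE₂⟩ := hsurj ⟨e₂', h₂'⟩
  obtain ⟨y, W, hW, hE₁W, hE₂W⟩ := h3.twoConnected.exists_isCycle_mem_edges E₁.2 E₂.2
  exact ⟨mapEdges G G' f {e | e ∈ W.edges}, hcirc _ ⟨y, W, hW, rfl⟩,
    ⟨E₁, hE₁W, by rw [hE₁]⟩, ⟨E₂, hE₂W, by rw [hE₂]⟩⟩
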